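/- For a Kripke structure K = (S, S₀, T, l) with T total and the LTL encoding Φ_K = b̃₀ ∧ ⋀_{s∈S} G(s̃ ⇒ X(⋁_{(s,s')∈T} s̃')), a linear structure M over the propositions P satisfies Φ_K at time 0 if and only if M is a K-linear structure starting from the initial state b̃₀, provided distinct states of K have distinct labels and each label determines the state (the labeling l is injective, and each state formula s̃ is the full conjunction ⋀_{p∈l(s)} p ∧ ⋀_{p∉l(s)} ¬p). -/

import Mathlib

/-! Satisfying Φ_K at time 0 says exactly that `M 0 = l s₀` and that whenever `M j = l s`, some
`T`-successor `s'` of `s` has `M (j + 1) = l s'`. Choosing such successors recursively yields the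
run. Conversely, along a run injectivity of `l` forces any `s` with `M j = l s` to be the run's
state at time `j`, whose successor in the run witnesses the disjunction in Φ_K. -/

/- LTL in negation normal form (negation only on propositional variables), with
standard semantics over linear time structures `M : ℕ → Set P`. -/

inductive LTL (P : Type) : Type
  | tt : LTL P
  | ff : LTL P
  | var : P → LTL P
  | nvar : P → LTL P
  | and : LTL P → LTL P → LTL P
  | or : LTL P → LTL P → LTL P
  | next : LTL P → LTL P
  | unt : LTL P → LTL P → LTL P   -- strong until U
  | wunt : LTL P → LTL P → LTL P  -- weak until W
  deriving DecidableEq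

def Sat {P : Type} (M : ℕ → Set P) : LTL P → ℕ → Prop
  | .tt, _ => True
  | .ff, _ => False
  | .var p, i => p ∈ M i
  | .nvar p, i => p ∉ M i
  | .and a b, i => Sat M a i ∧ Sat M b i
  | .or a b, i => Sat M a i ∨ Sat M b i
  | .next a, i => Sat M a (i + 1)
  | .unt a b, i => ∃ j, i ≤ j ∧ Sat M b j ∧ ∀ k, i ≤ k → k < j → Sat M a k
  | .wunt a b, i =>
      (∀ j, i ≤ j → Sat M a j) ∨ (∃ j, i ≤ j ∧ Sat M b j ∧ ∀ k, i ≤ k → k < j → Sat M a k)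

def LTL.G {P : Type} (a : LTL P) : LTL P := .wunt a .ff
def LTL.F {P : Type} (a : LTL P) : LTL P := .unt .tt a

def bigAnd {P : Type} (l : List (LTL P)) : LTL P := l.foldr .and .tt
def bigOr {P : Type} (l : List (LTL P)) : LTL P := l.foldr .or .ff

/- Encoding a finite Kripke structure K = (S, {s₀}, T, l) as the LTL formula
Φ_K = s̃₀ ∧ ⋀_{s∈S} G(s̃ ⇒ X(⋁_{(s,s')∈T} s̃')), where s̃ is the canonical complete
conjunction of literals determined by the label l(s). -/

variable {S P : Type} [Fintype S] [Fintype P] [DecidableEq P]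

/-- s̃ : the complete conjunction ⋀_{p∈l(s)} p ∧ ⋀_{p∉l(s)} ¬p. -/
noncomputable def stateForm (l : S → Finset P) (s : S) : LTL P :=
  bigAnd ((Finset.univ : Finset P).toList.map
    (fun p => if p ∈ l s then LTL.var p else LTL.nvar p))

/-- ¬s̃ as an NNF disjunction of literals. -/
noncomputable def negStateForm (l : S → Finset P) (s : S) : LTL P :=
  bigOr ((Finset.univ : Finset P).toList.map
    (fun p => if p ∈ l s then LTL.nvar p else LTL.var p))

/-- Φ_K. -/
noncomputable def PhiK (s₀ : S) (T : S → S → Bool) (l : S → Finset P) : LTL P :=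
  .and (stateForm l s₀)
    (bigAnd ((Finset.univ : Finset S).toList.map (fun s =>
      LTL.G (.or (negStateForm l s)
        (.next (bigOr (((Finset.univ : Finset S).toList.filter (fun s' => T s s')).map
          (stateForm l))))))))

theorem sat_bigAnd {α : Type} (M : ℕ → Set α) (L : List (LTL α)) (i : ℕ) :
    Sat M (bigAnd L) i ↔ ∀ a ∈ L, Sat M a i := by
  induction L with
  | nil => simp [bigAnd, Sat]
  | cons a L ih => simp [bigAnd, Sat, ← ih]

theorem sat_bigOr {α : Type} (M : ℕ → Set α) (L : List (LTL α)) (i : ℕ) :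
    Sat M (bigOr L) i ↔ ∃ a ∈ L, Sat M a i := by
  induction L with
  | nil => simp [bigOr, Sat]
  | cons a L ih => simp [bigOr, Sat, ← ih]

theorem sat_G {α : Type} (M : ℕ → Set α) (a : LTL α) (i : ℕ) :
    Sat M a.G i ↔ ∀ j, i ≤ j → Sat M a j := by
  simp [LTL.G, Sat]

theorem sat_literal {α : Type} [DecidableEq α] (M : ℕ → Set α) (X : Finset α) (p : α) (i : ℕ) :
    Sat M (if p ∈ X then .var p else .nvar p) i ↔ (p ∈ M i ↔ p ∈ X) := by
  by_cases hp : p ∈ X <;> simp [hp, Sat]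

theorem sat_negLiteral {α : Type} [DecidableEq α] (M : ℕ → Set α) (X : Finset α) (p : α) (i : ℕ) :
    Sat M (if p ∈ X then .nvar p else .var p) i ↔ ¬(p ∈ M i ↔ p ∈ X) := by
  by_cases hp : p ∈ X <;> simp [hp, Sat]

theorem sat_stateForm {σ : Type} (M : ℕ → Set P) (l : σ → Finset P) (s : σ) (i : ℕ) :
    Sat M (stateForm l s) i ↔ M i = ↑(l s) := by
  simp [stateForm, sat_bigAnd, sat_literal, Set.ext_iff]

theorem sat_negStateForm {σ : Type} (M : ℕ → Set P) (l : σ → Finset P) (s : σ) (i : ℕ) :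
    Sat M (negStateForm l s) i ↔ M i ≠ ↑(l s) := by
  simp [negStateForm, sat_bigOr, sat_negLiteral, Set.ext_iff]

theorem sat_PhiK_iff (M : ℕ → Set P) (s₀ : S) (T : S → S → Bool) (l : S → Finset P) :
    Sat M (PhiK s₀ T l) 0 ↔ M 0 = ↑(l s₀) ∧
      ∀ j s, M j = ↑(l s) → ∃ s', T s s' = true ∧ M (j + 1) = ↑(l s') := by
  simp [PhiK, Sat, sat_stateForm, sat_bigAnd, sat_G, sat_negStateForm, sat_bigOr,
    or_iff_not_imp_left, forall_comm (α := S)]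

theorem exists_seq_of_forall_exists_step {α : Type*} (R : ℕ → α → Prop) (r : α → α → Prop)
    {a : α} (h0 : R 0 a) (hstep : ∀ n x, R n x → ∃ y, r x y ∧ R (n + 1) y) :
    ∃ f : ℕ → α, f 0 = a ∧ ∀ n, R n (f n) ∧ r (f n) (f (n + 1)) := by
  choose next hnext_r hnext_R using hstep
  let g : ∀ n, {x // R n x} := fun n =>
    Nat.rec ⟨a, h0⟩ (fun n x => ⟨next n x x.2, hnext_R n x x.2⟩) n
  exact ⟨fun n => (g n).1, rfl, fun n => ⟨(g n).2, hnext_r n _ (g n).2⟩⟩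

theorem stmt18_general (s₀ : S) (T : S → S → Bool) (l : S → Finset P)
    (hlinj : Function.Injective l)
    (M : ℕ → Set P) :
    Sat M (PhiK s₀ T l) 0 ↔
      ∃ mp : ℕ → S, mp 0 = s₀ ∧ (∀ i, M i = ↑(l (mp i))) ∧
        ∀ i, T (mp i) (mp (i + 1)) = true := by
  rw [sat_PhiK_iff]
  constructor
  · rintro ⟨h0, hstep⟩
    obtain ⟨mp, hmp0, hmp⟩ := exists_seq_of_forall_exists_step (fun i s => M i = ↑(l s))
      (fun s s' => T s s' = true) h0 hstep
    exact ⟨mp, hmp0, fun i => (hmp i).1, fun i => (hmp i).2⟩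
  · rintro ⟨mp, rfl, hM, hT⟩
    refine ⟨hM 0, fun j s hs => ⟨mp (j + 1), ?_, hM (j + 1)⟩⟩
    obtain rfl : s = mp j := hlinj (Finset.coe_injective (hs.symm.trans (hM j)))
    exact hT j

/-- A linear structure satisfies Φ_K at time 0 iff it is a K-linear structure starting
from the initial state s₀ (provided T is total and the labeling l is injective). -/
theorem stmt18 (s₀ : S) (T : S → S → Bool) (l : S → Finset P)
    (hTtotal : ∀ s, ∃ s', T s s' = true) (hlinj : Function.Injective l)
    (M : ℕ → Set P) :
    Sat M (PhiK s₀ T l) 0 ↔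
      ∃ mp : ℕ → S, mp 0 = s₀ ∧ (∀ i, M i = ↑(l (mp i))) ∧
        ∀ i, T (mp i) (mp (i + 1)) = true :=
  stmt18_general s₀ T l hlinj M
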